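/- arXiv:1107.4462 — 2 statements merged into one kernel-verified Lean document; each statement's English description precedes it below -/
import Mathlib

section
/- The function f_K(x;r) = sqrt(1-r^2) / (π (1-x^2) sqrt(r^2-x^2)) on the interval (-r,r) is a probability density: for every r with 0 < r < 1, the integral of f_K(x;r) over x ∈ (-r,r) equals 1. -/
open Real MeasureTheory

/-- The Konno density function `f_K(x;r)`. -/
noncomputable def konnoDensity (r x : ℝ) : ℝ :=
  if x ∈ Set.Ioo (-r) r then Real.sqrt (1 - r ^ 2) / (π * (1 - x ^ 2) * Real.sqrt (r ^ 2 - x ^ 2))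
  else 0

/-! The function `x ↦ arcsin (√(1 - r²) x / (r √(1 - x²))) / π` is an antiderivative of
`f_K(·;r)` on `(-r, r)`, because
`1 - (√(1 - r²) x / (r √(1 - x²)))² = (r² - x²) / (r² (1 - x²))`. It is continuous on `[-r, r]` and takes the values `∓1/2` at the endpoints. Since `f_K ≥ 0`, the
fundamental theorem of calculus applies with no separate integrability argument, and the integral
is `1/2 - (-1/2) = 1`. -/

open Set

lemma hasDerivAt_div_sqrt_one_sub_sq {x : ℝ} (hx : x ^ 2 < 1) :
    HasDerivAt (fun y => y / √(1 - y ^ 2)) ((1 - x ^ 2) * √(1 - x ^ 2))⁻¹ x := by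
  have hpos : 0 < 1 - x ^ 2 := by linarith
  have hsqrt : HasDerivAt (fun y => √(1 - y ^ 2)) (-(2 * x) / (2 * √(1 - x ^ 2))) x := by
    refine HasDerivAt.sqrt ?_ hpos.ne'
    simpa using (hasDerivAt_pow 2 x).const_sub 1
  refine ((hasDerivAt_id' x).fun_div hsqrt (sqrt_pos.2 hpos).ne').congr_deriv ?_
  have hs : √(1 - x ^ 2) ^ 2 = 1 - x ^ 2 := sq_sqrt hpos.le
  field_simp
  rw [hs]
  ring

noncomputable def konnoPrimitive (r x : ℝ) : ℝ :=
  arcsin (√(1 - r ^ 2) / r * (x / √(1 - x ^ 2))) / π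

lemma konnoPrimitive_neg (r x : ℝ) : konnoPrimitive r (-x) = -konnoPrimitive r x := by
  simp only [konnoPrimitive, neg_sq, neg_div, mul_neg, arcsin_neg]

lemma konnoPrimitive_self {r : ℝ} (hr0 : 0 < r) (hr1 : r < 1) : konnoPrimitive r r = 1 / 2 := by
  have hc : 0 < √(1 - r ^ 2) := sqrt_pos.2 (by nlinarith)
  rw [konnoPrimitive, div_mul_div_comm, mul_comm, div_self (by positivity), arcsin_one]
  field_simp

lemma continuousOn_konnoPrimitive {r : ℝ} (hr1 : r < 1) :
    ContinuousOn (konnoPrimitive r) (Icc (-r) r) := by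
  refine (continuous_arcsin.comp_continuousOn ?_).div_const π
  refine continuousOn_const.mul (continuousOn_id.div (by fun_prop) fun x hx => ?_)
  have : x ^ 2 < 1 := by nlinarith [hx.1, hx.2]
  exact (sqrt_pos.2 (by linarith)).ne'

lemma konnoDensity_nonneg {r : ℝ} (hr1 : r ≤ 1) (x : ℝ) : 0 ≤ konnoDensity r x := by
  unfold konnoDensity
  split_ifs with hx
  · have : x ^ 2 < 1 := by nlinarith [hx.1, hx.2]
    have : 0 < 1 - x ^ 2 := by linarith
    positivity
  · exact le_rfl

lemma hasDerivAt_konnoPrimitive {r x : ℝ} (hr1 : r ≤ 1) (hx : x ∈ Ioo (-r) r) :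
    HasDerivAt (konnoPrimitive r) (konnoDensity r x) x := by
  have hxr : x ^ 2 < r ^ 2 := by nlinarith [hx.1, hx.2]
  have hr0 : 0 < r := by linarith [hx.1, hx.2]
  have hx1 : x ^ 2 < 1 := by nlinarith
  have hc2 : √(1 - r ^ 2) ^ 2 = 1 - r ^ 2 := sq_sqrt (by nlinarith)
  have hs1 : √(1 - x ^ 2) ^ 2 = 1 - x ^ 2 := sq_sqrt (by linarith)
  have hs2 : √(r ^ 2 - x ^ 2) ^ 2 = r ^ 2 - x ^ 2 := sq_sqrt (by linarith)
  have hs1pos : 0 < √(1 - x ^ 2) := sqrt_pos.2 (by linarith)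
  have hs2pos : 0 < √(r ^ 2 - x ^ 2) := sqrt_pos.2 (by linarith)
  set u := √(1 - r ^ 2) / r * (x / √(1 - x ^ 2)) with hu
  have hsqrt : √(1 - u ^ 2) = √(r ^ 2 - x ^ 2) / (r * √(1 - x ^ 2)) := by
    rw [← sqrt_sq (by positivity : 0 ≤ √(r ^ 2 - x ^ 2) / (r * √(1 - x ^ 2)))]
    congr 1
    rw [hu]
    field_simp
    rw [hs1, hc2, hs2]
    ring
  have hu1 : 0 < 1 - u ^ 2 := sqrt_pos.1 (by rw [hsqrt]; positivity)
  have harcsin := hasDerivAt_arcsin (x := u) (by nlinarith) (by nlinarith)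
  refine ((harcsin.comp x ((hasDerivAt_div_sqrt_one_sub_sq hx1).const_mul _)).div_const π
    ).congr_deriv ?_
  rw [konnoDensity, if_pos hx, hsqrt]
  field_simp

theorem konnoDensity_integral_eq_one (r : ℝ) (hr0 : 0 < r) (hr1 : r < 1) :
    ∫ x in Set.Ioo (-r) r, konnoDensity r x = 1 := by
  have hab : -r ≤ r := by linarith
  have hcont := continuousOn_konnoPrimitive hr1
  have hderiv : ∀ x ∈ Ioo (-r) r, HasDerivAt (konnoPrimitive r) (konnoDensity r x) x :=
    fun x hx => hasDerivAt_konnoPrimitive hr1.le hx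
  have hint : IntervalIntegrable (konnoDensity r) volume (-r) r :=
    (intervalIntegrable_iff_integrableOn_Ioc_of_le hab).2 <|
      intervalIntegral.integrableOn_deriv_of_nonneg hcont hderiv
        fun x _ => konnoDensity_nonneg hr1.le x
  rw [← integral_Ioc_eq_integral_Ioo, ← intervalIntegral.integral_of_le hab,
    intervalIntegral.integral_eq_sub_of_hasDerivAt_of_le hab hcont hderiv hint,
    konnoPrimitive_neg, konnoPrimitive_self hr0 hr1]
  norm_num
end

section
/- Let ω ∈ [0,2π) with ω ≠ 0, and set μ̄(0) = 2·((1-cos ω)/(3-2cos ω))², and for |x| ≥ 1 set μ̄(x) = μ̄(0) · (2-cos ω)/(3-2cos ω)^{|x|} · (1 + sign(x)·sin ω/(1+sin²ω)). Then the total mass ∑_{x∈ℤ} μ̄(x) is strictly less than 1. -/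
open Real

/-- Time-averaged limit measure of the one-defect quantum walk (Corollary 3.2 of Konno-Łuczak). -/
noncomputable def timeAvgMeasure (ω : ℝ) (x : ℤ) : ℝ :=
  if x = 0 then 2 * ((1 - Real.cos ω) / (3 - 2 * Real.cos ω)) ^ 2
  else
    (2 * ((1 - Real.cos ω) / (3 - 2 * Real.cos ω)) ^ 2) *
      ((2 - Real.cos ω) / (3 - 2 * Real.cos ω) ^ (x.natAbs)) *
      (1 + (if 0 < x then (1 : ℝ) else -1) * Real.sin ω / (1 + Real.sin ω ^ 2))

/-! The measure is a two-sided geometric sequence with ratio `(3 - 2 cos ω)⁻¹` and different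
amplitudes on the two half-lines; summing both geometric series gives the total mass
`2 (1 - cos ω) / (3 - 2 cos ω)`, which is `< 1` since the numerator is one less than the
denominator. -/

section TwoSidedGeometric

variable {𝕜 : Type*} [NormedField 𝕜]

def twoSidedGeometric (a p q r : 𝕜) (x : ℤ) : 𝕜 :=
  if x = 0 then a else (if 0 < x then p else q) * r ^ x.natAbs

variable (a p q r : 𝕜)

theorem twoSidedGeometric_zero : twoSidedGeometric a p q r 0 = a := if_pos rfl

theorem twoSidedGeometric_natCast_succ (n : ℕ) :
    twoSidedGeometric a p q r (n + 1 : ℕ) = p * r * r ^ n := by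
  rw [twoSidedGeometric, if_neg (by omega), if_pos (by omega), Int.natAbs_natCast, pow_succ]
  ring

theorem twoSidedGeometric_neg_succ (n : ℕ) :
    twoSidedGeometric a p q r (-(n + 1)) = q * r * r ^ n := by
  rw [twoSidedGeometric, if_neg (by omega), if_neg (by omega), Int.natAbs_neg,
    show ((n : ℤ) + 1).natAbs = n + 1 by omega, pow_succ]
  ring

variable {r} in
theorem hasSum_twoSidedGeometric (hr : ‖r‖ < 1) :
    HasSum (twoSidedGeometric a p q r) (a + (p + q) * r * (1 - r)⁻¹) := by
  have hgeom := hasSum_geometric_of_norm_lt_one hr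
  have hpos : HasSum (fun n : ℕ => twoSidedGeometric a p q r n) (a + p * r * (1 - r)⁻¹) := by
    rw [← hasSum_nat_add_iff' 1, Finset.sum_range_one, Nat.cast_zero, twoSidedGeometric_zero,
      add_sub_cancel_left]
    simpa only [twoSidedGeometric_natCast_succ] using hgeom.mul_left (p * r)
  have hneg : HasSum (fun n : ℕ => twoSidedGeometric a p q r (-(n + 1))) (q * r * (1 - r)⁻¹) := by
    simpa only [twoSidedGeometric_neg_succ] using hgeom.mul_left (q * r)
  convert hpos.of_nat_of_neg_add_one hneg using 1
  ring

end TwoSidedGeometric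

theorem timeAvgMeasure_eq_twoSidedGeometric (ω : ℝ) :
    timeAvgMeasure ω =
      let a := 2 * ((1 - cos ω) / (3 - 2 * cos ω)) ^ 2
      let t := sin ω / (1 + sin ω ^ 2)
      twoSidedGeometric a (a * (2 - cos ω) * (1 + t)) (a * (2 - cos ω) * (1 - t))
        (3 - 2 * cos ω)⁻¹ := by
  ext x
  unfold timeAvgMeasure twoSidedGeometric
  split_ifs <;> simp only [div_eq_mul_inv, inv_pow] <;> ring

theorem hasSum_timeAvgMeasure {ω : ℝ} (hω : cos ω ≠ 1) :
    HasSum (timeAvgMeasure ω) (2 * (1 - cos ω) / (3 - 2 * cos ω)) := by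
  have hc : cos ω < 1 := (cos_le_one ω).lt_of_ne hω
  have hR : 1 < 3 - 2 * cos ω := by linarith [neg_one_le_cos ω]
  have hr : (3 - 2 * cos ω)⁻¹ < 1 := inv_lt_one_of_one_lt₀ hR
  have hr' : ‖(3 - 2 * cos ω)⁻¹‖ < 1 := by rwa [norm_inv, Real.norm_of_nonneg (by linarith)]
  rw [timeAvgMeasure_eq_twoSidedGeometric]
  convert hasSum_twoSidedGeometric _ _ _ hr' using 1
  · rfl
  have h1 : 1 - cos ω ≠ 0 := by linarith
  have h2 : 3 - 2 * cos ω ≠ 0 := by linarith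
  have h3 : 1 - (3 - 2 * cos ω)⁻¹ = 2 * (1 - cos ω) / (3 - 2 * cos ω) := by
    field_simp
    ring
  rw [h3]
  field_simp
  ring

theorem timeAvgMeasure_total_mass_lt_one (ω : ℝ) (hω : ω ∈ Set.Ico 0 (2 * π)) (hω0 : ω ≠ 0) :
    (∑' x : ℤ, timeAvgMeasure ω x) < 1 := by
  have hcos : cos ω ≠ 1 := fun h =>
    hω0 ((cos_eq_one_iff_of_lt_of_lt (by linarith [hω.1, pi_pos]) hω.2).mp h)
  have hR : 0 < 3 - 2 * cos ω := by linarith [cos_le_one ω]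
  rw [(hasSum_timeAvgMeasure hcos).tsum_eq, div_lt_one hR]
  linarith
end
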